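/- Consider the cake [0, 2n−1] divided into 2n−1 unit subintervals, where agent 1's measure is Lebesgue measure restricted to the union of the n odd-indexed subintervals (subintervals 1,3,5,...,2n−1), and for j = 2,...,n, agent j's measure is Lebesgue measure restricted to the (2j−2)-th subinterval. With entitlements t_1 = (n−0.9)/n and t_j = 0.9/(n(n−1)) for j ≥ 2, in any t-proportional division agent 1's piece must have nonempty intersection of positive measure with each of his n positive subintervals, and agent 1 cannot receive a single interval intersecting two of his positive subintervals in positive measure; hence agent 1's piece consists of at least n disjoint intervals. -/

import Mathlib

open MeasureTheory Set

noncomputable section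

/-- The piece of agent `i` in a division given by cut points `x` and owner assignment. -/
def piece {n k : ℕ} (x : Fin (k + 2) → ℝ) (owner : Fin (k + 1) → Fin n) (i : Fin n) : Set ℝ :=
  ⋃ (j : Fin (k + 1)) (_ : owner j = i), Set.Ioc (x j.castSucc) (x j.succ)

/-- Agent 1's measure: Lebesgue measure on the union of the `n` odd unit subintervals
`[0,1], [2,3], …, [2n-2, 2n-1]` of the cake `[0, 2n-1]`. -/
def V₁ (n : ℕ) : Measure ℝ :=
  volume.restrict (⋃ m ∈ Finset.range n, Icc (2 * (m:ℝ)) (2 * m + 1))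

/-- Agent `a`'s measure for `a ≠ 0` (agent `j = a+1` in 1-based numbering): Lebesgue measure
on the `(2j-2)`-th unit subinterval, i.e. `[2a-1, 2a]`. -/
def Vother (a : ℕ) : Measure ℝ :=
  volume.restrict (Icc (2 * (a:ℝ) - 1) (2 * a))

/-!
Agent 1 values the whole cake at `n` and is entitled to `n - 0.9 > n - 1` of it, so his piece
must meet each of his `n` unit subintervals `[2m, 2m+1]` in positive measure. If one of his
intervals met two of them, `[2p, 2p+1]` and `[2q, 2q+1]` with `p < q`, it would contain
`(2p+1, 2p+2]`, which carries all of the value of the agent owning `[2p+1, 2p+2]`; that agent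
would get nothing although his entitlement is positive. So the `n` subintervals are met by `n`
distinct intervals of agent 1.
-/

open Function

lemma Finset.le_card_of_forall_lt_exists {α : Type*} {s : Finset α} {n : ℕ} (P : α → ℕ → Prop)
    (hex : ∀ m < n, ∃ a ∈ s, P a m)
    (huniq : ∀ a ∈ s, ∀ m₁ < n, ∀ m₂ < n, P a m₁ → P a m₂ → m₁ = m₂) :
    n ≤ s.card := by
  choose f hfs hfP using fun m : Fin n => hex m m.2
  simpa using Finset.card_le_card_of_injOn (s := Finset.univ) f (fun m _ => hfs m)
    fun m₁ _ m₂ _ h => Fin.ext <| huniq _ (hfs m₁) _ m₁.2 _ m₂.2 (hfP m₁) (h ▸ hfP m₂)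

lemma lt_and_lt_of_volume_Ioc_inter_Icc_pos {a b c d : ℝ}
    (h : 0 < volume (Ioc a b ∩ Icc c d)) : a < d ∧ c < b := by
  have hsub : Ioc a b ∩ Icc c d ⊆ Icc (max a c) (min b d) :=
    fun y ⟨⟨h₁, h₂⟩, h₃, h₄⟩ => ⟨max_le h₁.le h₃, le_min h₂ h₄⟩
  have hlt : max a c < min b d := by
    have := ENNReal.ofReal_pos.mp ((h.trans_le (measure_mono hsub)).trans_eq Real.volume_Icc)
    linarith
  exact ⟨(le_max_left a c).trans_lt (hlt.trans_le (min_le_right b d)),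
    (le_max_right a c).trans_lt (hlt.trans_le (min_le_left b d))⟩

lemma lt_of_measure_Ioc_inter_pos {μ : Measure ℝ} {a b : ℝ} {s : Set ℝ}
    (h : 0 < μ (Ioc a b ∩ s)) : a < b :=
  let ⟨_, ⟨ha, hb⟩, _⟩ := nonempty_of_measure_ne_zero h.ne'
  ha.trans_le hb

section Division

variable {n k : ℕ} {x : Fin (k + 2) → ℝ} {owner : Fin (k + 1) → Fin n}

lemma pairwise_disjoint_Ioc_castSucc_succ (hx : Monotone x) :
    Pairwise (Disjoint on fun j : Fin (k + 1) => Ioc (x j.castSucc) (x j.succ)) :=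
  (pairwise_disjoint_on _).2 fun _ _ hpq => Set.disjoint_left.2 fun _ hp hq =>
    hq.1.not_ge (hp.2.trans (hx (Fin.succ_le_castSucc_iff.2 hpq)))

lemma disjoint_piece_Ioc (hx : Monotone x) {i : Fin n} {j : Fin (k + 1)} (hj : owner j ≠ i) :
    Disjoint (piece x owner i) (Ioc (x j.castSucc) (x j.succ)) := by
  simp only [piece, disjoint_iUnion_left]
  rintro j' rfl
  exact pairwise_disjoint_Ioc_castSucc_succ hx fun h => hj (h ▸ rfl)

lemma exists_owner_eq_measure_Ioc_inter_pos {μ : Measure ℝ} {i : Fin n} {s : Set ℝ}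
    (h : 0 < μ (piece x owner i ∩ s)) :
    ∃ j, owner j = i ∧ 0 < μ (Ioc (x j.castSucc) (x j.succ) ∩ s) := by
  by_contra! hcon
  rw [piece, iUnion₂_inter] at h
  exact h.ne' (measure_iUnion_null fun j => measure_iUnion_null fun hj =>
    nonpos_iff_eq_zero.1 (hcon j hj))

end Division

-- `oddSubinterval m` is the paper's subinterval number `2m+1`.
def oddSubinterval (m : ℕ) : Set ℝ := Icc (2 * (m : ℝ)) (2 * m + 1)

lemma volume_oddSubinterval (m : ℕ) : volume (oddSubinterval m) = 1 := by
  simp [oddSubinterval, Real.volume_Icc]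

lemma pairwise_disjoint_oddSubinterval : Pairwise (Disjoint on oddSubinterval) :=
  (pairwise_disjoint_on _).2 fun p q hpq => Set.disjoint_left.2 fun _ hp hq => by
    have : (p : ℝ) + 1 ≤ q := by exact_mod_cast hpq
    linarith [hp.2, hq.1]

lemma V₁_apply (n : ℕ) (s : Set ℝ) :
    V₁ n s = volume (s ∩ ⋃ m ∈ Finset.range n, oddSubinterval m) :=
  Measure.restrict_apply' (Finset.measurableSet_biUnion _ fun _ _ => measurableSet_Icc)

lemma V₁_cake (n : ℕ) : V₁ n (Icc 0 (2 * n - 1)) = n := by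
  have hsub : ⋃ m ∈ Finset.range n, oddSubinterval m ⊆ Icc 0 (2 * n - 1) :=
    iUnion₂_subset fun m hm => by
      have : (m : ℝ) + 1 ≤ n := by exact_mod_cast Finset.mem_range.1 hm
      exact Icc_subset_Icc (by positivity) (by linarith)
  rw [V₁_apply, inter_eq_self_of_subset_right hsub,
    measure_biUnion_finset (pairwise_disjoint_oddSubinterval.set_pairwise _)
      fun _ _ => measurableSet_Icc]
  simp [volume_oddSubinterval]

lemma V₁_le_of_volume_inter_oddSubinterval_eq_zero {n m : ℕ} {s : Set ℝ} (hm : m < n)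
    (h : volume (s ∩ oddSubinterval m) = 0) : V₁ n s ≤ n - 1 := by
  have hsub : s ∩ ⋃ m' ∈ Finset.range n, oddSubinterval m' ⊆
      (s ∩ oddSubinterval m) ∪ ⋃ m' ∈ (Finset.range n).erase m, oddSubinterval m' := by
    rintro y ⟨hys, hy⟩
    obtain ⟨m', hm', hym'⟩ := mem_iUnion₂.1 hy
    rcases eq_or_ne m' m with rfl | hne
    · exact Or.inl ⟨hys, hym'⟩
    · exact Or.inr (mem_iUnion₂.2 ⟨m', Finset.mem_erase.2 ⟨hne, hm'⟩, hym'⟩)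
  calc V₁ n s ≤ volume (s ∩ oddSubinterval m) +
        volume (⋃ m' ∈ (Finset.range n).erase m, oddSubinterval m') :=
        (V₁_apply n s).trans_le ((measure_mono hsub).trans (measure_union_le _ _))
    _ ≤ 0 + ∑ m' ∈ (Finset.range n).erase m, volume (oddSubinterval m') := by
        rw [h]; gcongr; exact measure_biUnion_finset_le _ _
    _ = n - 1 := by
        simp [volume_oddSubinterval, Finset.card_erase_of_mem (Finset.mem_range.2 hm)]

theorem volume_inter_oddSubinterval_pos {n m : ℕ} {s : Set ℝ}
    (hs : ENNReal.ofReal (((n : ℝ) - 0.9) / n) * V₁ n (Icc 0 (2 * n - 1)) ≤ V₁ n s)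
    (hm : m < n) : 0 < volume (s ∩ oddSubinterval m) := by
  have hn : (1 : ℝ) ≤ n := Nat.one_le_cast.2 (by omega)
  refine pos_iff_ne_zero.2 fun h => ?_
  have key : ENNReal.ofReal ((n : ℝ) - 0.9) ≤ ENNReal.ofReal ((n : ℝ) - 1) :=
    calc ENNReal.ofReal ((n : ℝ) - 0.9) = ENNReal.ofReal (((n : ℝ) - 0.9) / n) * n := by
          rw [← ENNReal.ofReal_natCast,
            ← ENNReal.ofReal_mul (div_nonneg (by linarith) (by linarith)),
            div_mul_cancel₀ _ (by linarith : (0 : ℝ) < n).ne']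
      _ ≤ V₁ n s := V₁_cake n ▸ hs
      _ ≤ n - 1 := V₁_le_of_volume_inter_oddSubinterval_eq_zero hm h
      _ = ENNReal.ofReal ((n : ℝ) - 1) := by
          rw [ENNReal.ofReal_sub _ zero_le_one, ENNReal.ofReal_one, ENNReal.ofReal_natCast]
  linarith [(ENNReal.ofReal_le_ofReal_iff (by linarith)).1 key]

lemma Vother_eq_zero_of_disjoint {a : ℕ} {s : Set ℝ}
    (h : Disjoint s (Ioc (2 * (a : ℝ) - 1) (2 * a))) : Vother a s = 0 := by
  rw [Vother, ← Measure.restrict_congr_set Ioc_ae_eq_Icc,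
    Measure.restrict_apply' measurableSet_Ioc, h.inter_eq, measure_empty]

lemma Vother_cake {n a : ℕ} (ha : 1 ≤ a) (han : a < n) : Vother a (Icc 0 (2 * n - 1)) = 1 := by
  have ha' : (1 : ℝ) ≤ a := by exact_mod_cast ha
  have han' : (a : ℝ) + 1 ≤ n := by exact_mod_cast han
  rw [Vother, Measure.restrict_apply measurableSet_Icc,
    inter_eq_self_of_subset_right (Icc_subset_Icc (by linarith) (by linarith)), Real.volume_Icc]
  norm_num

lemma Ioc_subset_of_volume_inter_oddSubinterval_pos {a b : ℝ} {p q : ℕ} (hpq : p < q)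
    (hp : 0 < volume (Ioc a b ∩ oddSubinterval p))
    (hq : 0 < volume (Ioc a b ∩ oddSubinterval q)) :
    Ioc (2 * ((p + 1 : ℕ) : ℝ) - 1) (2 * (p + 1 : ℕ)) ⊆ Ioc a b := by
  have ha := (lt_and_lt_of_volume_Ioc_inter_Icc_pos hp).1
  have hb := (lt_and_lt_of_volume_Ioc_inter_Icc_pos hq).2
  have : (p : ℝ) + 1 ≤ q := by exact_mod_cast hpq
  exact Ioc_subset_Ioc (by push_cast; linarith) (by push_cast; linarith)

theorem not_proportional_of_volume_inter_oddSubinterval_pos {n k : ℕ} {x : Fin (k + 2) → ℝ}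
    {owner : Fin (k + 1) → Fin n} (hx : Monotone x) {a : Fin n} {p q : ℕ} (ha : (a : ℕ) = p + 1)
    (hprop : ENNReal.ofReal (0.9 / ((n : ℝ) * (n - 1))) * Vother a (Icc 0 (2 * n - 1)) ≤
      Vother a (piece x owner a))
    {j : Fin (k + 1)} (hj : owner j ≠ a) (hpq : p < q)
    (hp : 0 < volume (Ioc (x j.castSucc) (x j.succ) ∩ oddSubinterval p))
    (hq : 0 < volume (Ioc (x j.castSucc) (x j.succ) ∩ oddSubinterval q)) : False := by
  have hn : (2 : ℝ) ≤ n := by exact_mod_cast (by omega : 2 ≤ n)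
  have hsub := ha ▸ Ioc_subset_of_volume_inter_oddSubinterval_pos hpq hp hq
  rw [Vother_cake (by omega) a.2, mul_one,
    Vother_eq_zero_of_disjoint ((disjoint_piece_Ioc hx hj).mono_right hsub),
    nonpos_iff_eq_zero, ENNReal.ofReal_eq_zero] at hprop
  have : (0 : ℝ) < 0.9 / ((n : ℝ) * (n - 1)) := div_pos (by norm_num) (by nlinarith)
  linarith

theorem lower_bound_structure_general (n : ℕ)
    (i0 : Fin n) (hi0 : (i0 : ℕ) = 0)
    (V : Fin n → Measure ℝ)
    (hV1 : V i0 = V₁ n)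
    (hVo : ∀ a : Fin n, a ≠ i0 → V a = Vother a)
    (t : Fin n → ℝ)
    (ht1 : t i0 = ((n:ℝ) - 0.9) / n)
    (hto : ∀ a : Fin n, a ≠ i0 → t a = 0.9 / ((n:ℝ) * (n - 1)))
    (k : ℕ) (x : Fin (k + 2) → ℝ) (owner : Fin (k + 1) → Fin n)
    (hmono : Monotone x)
    (hprop : ∀ i, ENNReal.ofReal (t i) * V i (Icc (0:ℝ) (2 * n - 1)) ≤ V i (piece x owner i)) :
    (∀ m < n, 0 < volume (piece x owner i0 ∩ Icc (2 * (m:ℝ)) (2 * m + 1))) ∧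
    (∀ j : Fin (k + 1), owner j = i0 →
      ¬ ∃ m₁ m₂ : ℕ, m₁ < n ∧ m₂ < n ∧ m₁ ≠ m₂ ∧
        0 < volume (Ioc (x j.castSucc) (x j.succ) ∩ Icc (2 * (m₁:ℝ)) (2 * m₁ + 1)) ∧
        0 < volume (Ioc (x j.castSucc) (x j.succ) ∩ Icc (2 * (m₂:ℝ)) (2 * m₂ + 1))) ∧
    n ≤ (Finset.univ.filter
          (fun j : Fin (k + 1) => owner j = i0 ∧ x j.castSucc < x j.succ)).card := by
  have hmeets : ∀ m < n, 0 < volume (piece x owner i0 ∩ oddSubinterval m) := fun m =>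
    volume_inter_oddSubinterval_pos (by simpa only [hV1, ht1] using hprop i0)
  have hsep : ∀ j, owner j = i0 → ∀ p q, p < q → q < n →
      0 < volume (Ioc (x j.castSucc) (x j.succ) ∩ oddSubinterval p) →
      0 < volume (Ioc (x j.castSucc) (x j.succ) ∩ oddSubinterval q) → False := by
    intro j hj p q hpq hqn
    set a : Fin n := ⟨p + 1, by omega⟩
    have ha : a ≠ i0 := fun h => by simpa [a, hi0] using congrArg Fin.val h
    exact not_proportional_of_volume_inter_oddSubinterval_pos hmono rfl
      (by simpa only [hVo a ha, hto a ha] using hprop a) (hj ▸ ha.symm) hpq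
  have hunique : ∀ j, owner j = i0 → ∀ m₁ < n, ∀ m₂ < n,
      0 < volume (Ioc (x j.castSucc) (x j.succ) ∩ oddSubinterval m₁) →
      0 < volume (Ioc (x j.castSucc) (x j.succ) ∩ oddSubinterval m₂) → m₁ = m₂ := by
    intro j hj m₁ h₁ m₂ h₂ hp₁ hp₂
    rcases lt_trichotomy m₁ m₂ with h | h | h
    exacts [(hsep j hj _ _ h h₂ hp₁ hp₂).elim, h, (hsep j hj _ _ h h₁ hp₂ hp₁).elim]
  refine ⟨hmeets, fun j hj ⟨m₁, m₂, h₁, h₂, hne, hp₁, hp₂⟩ =>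
    hne (hunique j hj m₁ h₁ m₂ h₂ hp₁ hp₂), ?_⟩
  refine Finset.le_card_of_forall_lt_exists
    (fun j m => 0 < volume (Ioc (x j.castSucc) (x j.succ) ∩ oddSubinterval m))
    (fun m hm => ?_) fun j hj => hunique j (Finset.mem_filter.1 hj).2.1
  obtain ⟨j, hj, hpos⟩ := exists_owner_eq_measure_Ioc_inter_pos (hmeets m hm)
  exact ⟨j, Finset.mem_filter.2 ⟨Finset.mem_univ _, hj, lt_of_measure_Ioc_inter_pos hpos⟩, hpos⟩

/-- In any `t`-proportional division of the cake `[0, 2n-1]` with the measures above and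
entitlements `t₁ = (n - 0.9)/n`, `t_j = 0.9/(n(n-1))`, agent 1's piece meets every odd
subinterval in positive measure, no single interval owned by agent 1 meets two distinct odd
subintervals in positive measure, and agent 1 owns at least `n` (nondegenerate) intervals. -/
theorem lower_bound_structure (n : ℕ) (hn : 2 ≤ n)
    (i0 : Fin n) (hi0 : (i0 : ℕ) = 0)
    (V : Fin n → Measure ℝ)
    (hV1 : V i0 = V₁ n)
    (hVo : ∀ a : Fin n, a ≠ i0 → V a = Vother a)
    (t : Fin n → ℝ)
    (ht1 : t i0 = ((n:ℝ) - 0.9) / n)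
    (hto : ∀ a : Fin n, a ≠ i0 → t a = 0.9 / ((n:ℝ) * (n - 1)))
    (k : ℕ) (x : Fin (k + 2) → ℝ) (owner : Fin (k + 1) → Fin n)
    (hmono : Monotone x) (hx0 : x 0 = 0) (hxl : x (Fin.last (k + 1)) = 2 * (n:ℝ) - 1)
    (hprop : ∀ i, ENNReal.ofReal (t i) * V i (Icc (0:ℝ) (2 * n - 1)) ≤ V i (piece x owner i)) :
    (∀ m < n, 0 < volume (piece x owner i0 ∩ Icc (2 * (m:ℝ)) (2 * m + 1))) ∧
    (∀ j : Fin (k + 1), owner j = i0 →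
      ¬ ∃ m₁ m₂ : ℕ, m₁ < n ∧ m₂ < n ∧ m₁ ≠ m₂ ∧
        0 < volume (Ioc (x j.castSucc) (x j.succ) ∩ Icc (2 * (m₁:ℝ)) (2 * m₁ + 1)) ∧
        0 < volume (Ioc (x j.castSucc) (x j.succ) ∩ Icc (2 * (m₂:ℝ)) (2 * m₂ + 1))) ∧
    n ≤ (Finset.univ.filter
          (fun j : Fin (k + 1) => owner j = i0 ∧ x j.castSucc < x j.succ)).card :=
  lower_bound_structure_general n i0 hi0 V hV1 hVo t ht1 hto k x owner hmono hprop
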